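/- Let f ∈ ℝ, d ∈ ℝ^p, and let H be a p×p real symmetric positive semidefinite matrix. For s > 0 define z(s) = f / √(1 + (π/8)·dᵀ·(s⁻¹·I + H)⁻¹·d). Then the map s ↦ σ(|z(s)|) is antitone (non-increasing) on (0, ∞). (Monotonicity claim of Proposition 2.5 / the last-layer Laplace proposition: the confidence σ(|z(x)|) is a decreasing function of the prior variance σ₀² = s.) -/

import Mathlib

/-!
Inversion reverses the Loewner order of positive definite matrices, which is seen on quadratic
forms through `dᵀ B⁻¹ d = sup_x (2 xᵀd - xᵀ B x)`: the supremum grows as `B` shrinks. As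
`s⁻¹ • 1 + H` decreases in `s`, the variance `dᵀ(s⁻¹ • 1 + H)⁻¹d` increases, hence `|z(s)|`
decreases, and `σ` is monotone.
-/

open Matrix

/-- The logistic (sigmoid) function. -/
noncomputable def sigmoid (t : ℝ) : ℝ := 1 / (1 + Real.exp (-t))

lemma sigmoid_eq_real_sigmoid : sigmoid = Real.sigmoid := by
  funext t
  rw [sigmoid, Real.sigmoid_def, one_div]

lemma sigmoid_monotone : Monotone sigmoid :=
  sigmoid_eq_real_sigmoid ▸ Real.sigmoid_monotone

lemma abs_div_sqrt_one_add_mul_le (f : ℝ) {c a b : ℝ} (hc : 0 ≤ c) (ha : 0 ≤ a) (hab : a ≤ b) :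
    |f / √(1 + c * b)| ≤ |f / √(1 + c * a)| := by
  rw [abs_div, abs_div, abs_of_nonneg (Real.sqrt_nonneg _), abs_of_nonneg (Real.sqrt_nonneg _)]
  gcongr

namespace Matrix

variable {n : Type*} [DecidableEq n]

lemma posDef_inv_smul_one_add {H : Matrix n n ℝ} (hH : H.PosSemidef) {s : ℝ} (hs : 0 < s) :
    (s⁻¹ • (1 : Matrix n n ℝ) + H).PosDef :=
  (PosDef.one.smul (inv_pos.mpr hs)).add_posSemidef hH

variable [Fintype n]

/-- Expand `0 ≤ (x - B⁻¹d)ᵀ B (x - B⁻¹d)`. -/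
lemma PosDef.two_mul_dotProduct_sub_le_dotProduct_inv_mulVec {B : Matrix n n ℝ}
    (hB : B.PosDef) (x d : n → ℝ) :
    2 * (x ⬝ᵥ d) - x ⬝ᵥ (B *ᵥ x) ≤ d ⬝ᵥ (B⁻¹ *ᵥ d) := by
  set v := B⁻¹ *ᵥ d
  have hBv : B *ᵥ v = d := by
    rw [mulVec_mulVec, mul_nonsing_inv B ((isUnit_iff_isUnit_det B).mp hB.isUnit), one_mulVec]
  have hvBx : v ⬝ᵥ (B *ᵥ x) = x ⬝ᵥ d := by
    have hBt : Bᵀ = B := by simpa using hB.isHermitian.eq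
    rw [dotProduct_mulVec, ← mulVec_transpose, hBt, hBv, dotProduct_comm]
  have hsq := hB.posSemidef.dotProduct_mulVec_nonneg (x - v)
  simp only [star_trivial, mulVec_sub, hBv, sub_dotProduct, dotProduct_sub, hvBx] at hsq
  rw [dotProduct_comm v d] at hsq
  linarith

lemma dotProduct_inv_mulVec_le_of_posSemidef_sub {A B : Matrix n n ℝ} (hB : B.PosDef)
    (hAB : (A - B).PosSemidef) (d : n → ℝ) : d ⬝ᵥ (A⁻¹ *ᵥ d) ≤ d ⬝ᵥ (B⁻¹ *ᵥ d) := by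
  have hA : A.PosDef := by simpa using hB.add_posSemidef hAB
  set x := A⁻¹ *ᵥ d
  have hAx : A *ᵥ x = d := by
    rw [mulVec_mulVec, mul_nonsing_inv A ((isUnit_iff_isUnit_det A).mp hA.isUnit), one_mulVec]
  have hBA : x ⬝ᵥ (B *ᵥ x) ≤ x ⬝ᵥ (A *ᵥ x) := by
    have := hAB.dotProduct_mulVec_nonneg x
    simp only [star_trivial, sub_mulVec, dotProduct_sub] at this
    linarith
  calc d ⬝ᵥ x = 2 * (x ⬝ᵥ d) - x ⬝ᵥ (A *ᵥ x) := by rw [hAx, dotProduct_comm]; ring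
    _ ≤ 2 * (x ⬝ᵥ d) - x ⬝ᵥ (B *ᵥ x) := by linarith
    _ ≤ d ⬝ᵥ (B⁻¹ *ᵥ d) := hB.two_mul_dotProduct_sub_le_dotProduct_inv_mulVec x d

lemma PosDef.dotProduct_inv_mulVec_nonneg {B : Matrix n n ℝ} (hB : B.PosDef) (d : n → ℝ) :
    0 ≤ d ⬝ᵥ (B⁻¹ *ᵥ d) := by
  simpa using hB.inv.posSemidef.dotProduct_mulVec_nonneg d

lemma monotoneOn_dotProduct_inv_smul_one_add_mulVec {H : Matrix n n ℝ} (hH : H.PosSemidef)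
    (d : n → ℝ) :
    MonotoneOn (fun s : ℝ => d ⬝ᵥ ((s⁻¹ • (1 : Matrix n n ℝ) + H)⁻¹ *ᵥ d)) (Set.Ioi 0) := by
  intro s hs t ht hst
  refine dotProduct_inv_mulVec_le_of_posSemidef_sub (posDef_inv_smul_one_add hH ht) ?_ d
  rw [add_sub_add_right_eq_sub, ← sub_smul]
  exact PosSemidef.one.smul (sub_nonneg.mpr (inv_anti₀ hs hst))

end Matrix

/-- Monotonicity claim of Proposition 2.5: the confidence
`σ(|f / √(1 + (π/8)·dᵀ(s⁻¹·I + H)⁻¹d)|)` is a non-increasing function of the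
prior variance `s` on `(0, ∞)`. -/
theorem antitoneOn_confidence_priorVar {p : ℕ}
    (f : ℝ) (d : Fin p → ℝ)
    (H : Matrix (Fin p) (Fin p) ℝ) (hH : H.PosSemidef) :
    AntitoneOn
      (fun s : ℝ =>
        sigmoid |f / Real.sqrt (1 + Real.pi / 8 *
          (d ⬝ᵥ ((s⁻¹ • (1 : Matrix (Fin p) (Fin p) ℝ) + H)⁻¹ *ᵥ d)))|)
      (Set.Ioi 0) := by
  intro s hs t ht hst
  have hvariance := monotoneOn_dotProduct_inv_smul_one_add_mulVec hH d hs ht hst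
  have hnonneg := (posDef_inv_smul_one_add hH hs).dotProduct_inv_mulVec_nonneg d
  exact sigmoid_monotone (abs_div_sqrt_one_add_mul_le f (by positivity) hnonneg hvariance)
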